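/- Let Ω = (0,R) × (−a,a) with measure r dr dz, and let ψ be a smooth solution of −ψ,rr − (1/r)ψ,r − ψ,zz + ψ/r² = ω in Ω with ψ = 0 on the full boundary (r = R, z = ±a) and ψ = O(r) as r → 0⁺ uniformly in z. Then ∫_Ω (ψ,rz² + ψ,zz²) r dr dz + ∫_Ω ψ,z²/r² r dr dz ≤ c ∫_Ω ω² r dr dz. -/

import Mathlib

/-!
Multiply the equation by `-ψ,zz r` and integrate over `(0, R) × (-a, a)`. Since `ψ`, hence
`ψ,r` and `ψ,rr`, vanish on `z = ±a`, integrating by parts in `z` turns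
`∫ ψ,rr ψ,zz r`, `∫ ψ,r ψ,zz` and `-∫ ψ ψ,zz / r` into `-∫ ψ,rrz ψ,z r`, `-∫ ψ,rz ψ,z` and
`∫ ψ,z² / r`. A further integration by parts in `r` (no boundary terms: `ψ,z = 0` at `r = R`,
and the weight `r` vanishes on the axis) gives `-∫ ψ,rrz ψ,z r = ∫ ψ,rz² r + ∫ ψ,rz ψ,z`, so the
mixed terms cancel and
`-∫ ω ψ,zz r = ∫ (ψ,rz² + ψ,zz²) r + ∫ ψ,z² / r`.
Young's inequality on the left then yields the estimate with `c = 1`. The growth condition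
`ψ = O(r)` makes `ψ` and `ψ,z` vanish on the axis, so `ψ / r` and `ψ,z / r` are bounded and all
the integrals are finite.
-/

open MeasureTheory Set

/-- Partial derivative in the first (radial) variable. -/
noncomputable def pdr (f : ℝ → ℝ → ℝ) : ℝ → ℝ → ℝ := fun r z => deriv (fun s => f s z) r

/-- Partial derivative in the second (axial) variable. -/
noncomputable def pdz (f : ℝ → ℝ → ℝ) : ℝ → ℝ → ℝ := fun r z => deriv (fun w => f r w) z

open Function Filter Topology

section PartialDerivatives

variable {f : ℝ → ℝ → ℝ} {m n : WithTop ℕ∞}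

theorem hasDerivAt_pdr (hf : ContDiff ℝ 1 (uncurry f)) (r z : ℝ) :
    HasDerivAt (fun s => f s z) (pdr f r z) r :=
  ((hf.comp (contDiff_id.prodMk contDiff_const)).differentiable one_ne_zero r).hasDerivAt

theorem hasDerivAt_pdz (hf : ContDiff ℝ 1 (uncurry f)) (r z : ℝ) :
    HasDerivAt (fun w => f r w) (pdz f r z) z :=
  ((hf.comp (contDiff_const.prodMk contDiff_id)).differentiable one_ne_zero z).hasDerivAt

theorem pdr_eq_fderiv (hf : ContDiff ℝ 1 (uncurry f)) (r z : ℝ) :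
    pdr f r z = fderiv ℝ (uncurry f) (r, z) (1, 0) :=
  (hasDerivAt_pdr hf r z).unique <|
    (hf.differentiable one_ne_zero (r, z)).hasFDerivAt.comp_hasDerivAt (f := fun s => (s, z)) r
      ((hasDerivAt_id r).prodMk (hasDerivAt_const r z))

theorem pdz_eq_fderiv (hf : ContDiff ℝ 1 (uncurry f)) (r z : ℝ) :
    pdz f r z = fderiv ℝ (uncurry f) (r, z) (0, 1) :=
  (hasDerivAt_pdz hf r z).unique <|
    (hf.differentiable one_ne_zero (r, z)).hasFDerivAt.comp_hasDerivAt (f := fun w => (r, w)) z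
      ((hasDerivAt_const z r).prodMk (hasDerivAt_id z))

theorem contDiff_pdr (hf : ContDiff ℝ n (uncurry f)) (hmn : m + 1 ≤ n) :
    ContDiff ℝ m (uncurry (pdr f)) := by
  have hf1 : ContDiff ℝ 1 (uncurry f) := hf.of_le (le_add_self.trans hmn)
  rw [show uncurry (pdr f) = fun p => fderiv ℝ (uncurry f) p (1, 0) from
    funext fun p => pdr_eq_fderiv hf1 p.1 p.2]
  exact (hf.fderiv_right hmn).clm_apply contDiff_const

theorem contDiff_pdz (hf : ContDiff ℝ n (uncurry f)) (hmn : m + 1 ≤ n) :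
    ContDiff ℝ m (uncurry (pdz f)) := by
  have hf1 : ContDiff ℝ 1 (uncurry f) := hf.of_le (le_add_self.trans hmn)
  rw [show uncurry (pdz f) = fun p => fderiv ℝ (uncurry f) p (0, 1) from
    funext fun p => pdz_eq_fderiv hf1 p.1 p.2]
  exact (hf.fderiv_right hmn).clm_apply contDiff_const

theorem continuous_pdr (hf : ContDiff ℝ 1 (uncurry f)) : Continuous (uncurry (pdr f)) :=
  (contDiff_pdr (m := 0) hf (by simp)).continuous

theorem continuous_pdz (hf : ContDiff ℝ 1 (uncurry f)) : Continuous (uncurry (pdz f)) :=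
  (contDiff_pdz (m := 0) hf (by simp)).continuous

theorem pdz_pdr_comm (hf : ContDiff ℝ 2 (uncurry f)) : pdz (pdr f) = pdr (pdz f) := by
  ext r z
  have hf1 : ContDiff ℝ 1 (uncurry f) := hf.of_le one_le_two
  have hd : Differentiable ℝ (fderiv ℝ (uncurry f)) :=
    (hf.fderiv_right (m := 1) le_rfl).differentiable one_ne_zero
  have hsecond : ∀ v w : ℝ × ℝ,
      fderiv ℝ (fun p => fderiv ℝ (uncurry f) p v) (r, z) w
        = fderiv ℝ (fderiv ℝ (uncurry f)) (r, z) w v := fun v w => by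
    rw [fderiv_clm_apply (hd (r, z)) (differentiableAt_const v)]
    simp
  rw [pdz_eq_fderiv (contDiff_pdr hf le_rfl), pdr_eq_fderiv (contDiff_pdz hf le_rfl)]
  simp only [show uncurry (pdr f) = fun p => fderiv ℝ (uncurry f) p (1, 0) from
      funext fun p => pdr_eq_fderiv hf1 p.1 p.2,
    show uncurry (pdz f) = fun p => fderiv ℝ (uncurry f) p (0, 1) from
      funext fun p => pdz_eq_fderiv hf1 p.1 p.2, hsecond]
  exact (hf.contDiffAt.isSymmSndFDerivAt (by simp) _ _).symm

theorem pdr_eq_zero_of_eqOn {U : Set ℝ} (hU : IsOpen U) {r z : ℝ}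
    (hf : ∀ s ∈ U, f s z = 0) (hr : r ∈ U) : pdr f r z = 0 :=
  ((eventuallyEq_of_mem (hU.mem_nhds hr) hf).deriv_eq).trans (deriv_const r 0)

theorem pdz_eq_zero_of_eqOn {U : Set ℝ} (hU : IsOpen U) {r z : ℝ}
    (hf : ∀ w ∈ U, f r w = 0) (hz : z ∈ U) : pdz f r z = 0 :=
  ((eventuallyEq_of_mem (hU.mem_nhds hz) hf).deriv_eq).trans (deriv_const z 0)

end PartialDerivatives

theorem eq_zero_of_abs_le_mul {g : ℝ → ℝ} {C R : ℝ} (hR : 0 < R)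
    (hg : ContinuousWithinAt g (Ioi 0) 0) (h : ∀ r ∈ Ioo 0 R, |g r| ≤ C * r) : g 0 = 0 := by
  have hlim : Tendsto (fun r => |g r| - C * r) (𝓝[>] 0) (𝓝 (|g 0| - C * 0)) :=
    (hg.abs.sub (continuous_const_mul C).continuousWithinAt).tendsto
  have hle : |g 0| - C * 0 ≤ 0 :=
    le_of_tendsto hlim (eventually_of_mem (Ioo_mem_nhdsGT hR) fun r hr => sub_nonpos.2 (h r hr))
  exact abs_nonpos_iff.1 (by linarith)

theorem abs_le_mul_of_eq_zero_at_zero {f : ℝ → ℝ → ℝ} (hf : ContDiff ℝ 1 (uncurry f))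
    {L r z : ℝ} (hr : 0 ≤ r) (h0 : f 0 z = 0) (hL : ∀ s ∈ Icc 0 r, |pdr f s z| ≤ L) :
    |f r z| ≤ L * r := by
  have := norm_image_sub_le_of_norm_deriv_le_segment'
    (fun s _ => (hasDerivAt_pdr hf s z).hasDerivWithinAt)
    (fun s hs => hL s (Ico_subset_Icc_self hs))
    r ⟨hr, le_rfl⟩
  simpa [h0] using this

/-- `dr dz`, not `r dr dz`: the weight `r` is written into the integrands. -/
noncomputable def rectMeasure (R a : ℝ) : Measure (ℝ × ℝ) :=
  (volume.restrict (Ioo 0 R)).prod (volume.restrict (Ioo (-a) a))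

section Rectangle

variable {R a : ℝ}

theorem rectMeasure_eq : rectMeasure R a = volume.restrict (Ioo 0 R ×ˢ Ioo (-a) a) := by
  rw [rectMeasure, Measure.prod_restrict, ← Measure.volume_eq_prod]

instance : IsFiniteMeasure (rectMeasure R a) := by
  rw [rectMeasure]; infer_instance

theorem ae_rectMeasure_mem : ∀ᵐ p ∂rectMeasure R a, p.1 ∈ Ioo 0 R ∧ p.2 ∈ Ioo (-a) a := by
  rw [rectMeasure_eq]
  exact ae_restrict_mem (measurableSet_Ioo.prod measurableSet_Ioo)

theorem ae_rectMeasure_pos : ∀ᵐ p ∂rectMeasure R a, 0 < p.1 := by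
  filter_upwards [ae_rectMeasure_mem] with p hp using hp.1.1

theorem Continuous.integrable_rectMeasure {F : ℝ × ℝ → ℝ} (hF : Continuous F) :
    Integrable F (rectMeasure R a) := by
  rw [rectMeasure_eq]
  exact (hF.continuousOn.integrableOn_compact (isCompact_Icc.prod isCompact_Icc)).mono_set
    (prod_mono Ioo_subset_Icc_self Ioo_subset_Icc_self)

/-- Since `f` vanishes on the axis, `f / r` stays bounded. -/
theorem integrable_mul_mul_inv_of_eq_zero_on_axis {f g : ℝ → ℝ → ℝ}
    (hf : ContDiff ℝ 1 (uncurry f)) (hg : Continuous (uncurry g))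
    (h0 : ∀ z ∈ Ioo (-a) a, f 0 z = 0) :
    Integrable (fun p : ℝ × ℝ => f p.1 p.2 * g p.1 p.2 * p.1⁻¹) (rectMeasure R a) := by
  have hK : IsCompact (Icc 0 R ×ˢ Icc (-a) a) := isCompact_Icc.prod isCompact_Icc
  obtain ⟨L, hL⟩ := hK.exists_bound_of_continuousOn (continuous_pdr hf).continuousOn
  obtain ⟨M, hM⟩ := hK.exists_bound_of_continuousOn hg.continuousOn
  have hmeas : Measurable fun p : ℝ × ℝ => f p.1 p.2 * g p.1 p.2 * p.1⁻¹ :=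
    (hf.continuous.measurable.mul hg.measurable).mul measurable_fst.inv
  refine Integrable.of_bound hmeas.aestronglyMeasurable (L * M) ?_
  filter_upwards [ae_rectMeasure_mem] with p ⟨hr, hz⟩
  have hfL : |f p.1 p.2| ≤ L * p.1 :=
    abs_le_mul_of_eq_zero_at_zero hf hr.1.le (h0 p.2 hz) fun s hs =>
      hL (s, p.2) ⟨⟨hs.1, hs.2.trans hr.2.le⟩, Ioo_subset_Icc_self hz⟩
  have hgM : |g p.1 p.2| ≤ M := hM p ⟨Ioo_subset_Icc_self hr, Ioo_subset_Icc_self hz⟩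
  have hfL' : |f p.1 p.2| / p.1 ≤ L := (div_le_iff₀ hr.1).2 hfL
  rw [Real.norm_eq_abs, abs_mul, abs_mul, abs_inv, abs_of_pos hr.1]
  calc |f p.1 p.2| * |g p.1 p.2| * p.1⁻¹ = |f p.1 p.2| / p.1 * |g p.1 p.2| := by ring
    _ ≤ L * M := mul_le_mul hfL' hgM (abs_nonneg _) ((div_nonneg (abs_nonneg _) hr.1.le).trans hfL')

variable {F : ℝ → ℝ → ℝ}

theorem ae_rectMeasure_nonneg (h0 : ∀ r ∈ Ioo 0 R, ∀ z ∈ Ioo (-a) a, 0 ≤ F r z) :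
    0 ≤ᵐ[rectMeasure R a] fun p : ℝ × ℝ => F p.1 p.2 := by
  filter_upwards [ae_rectMeasure_mem] with p hp using h0 _ hp.1 _ hp.2

theorem lintegral_Ioo_Ioo_eq_lintegral_rectMeasure
    (hF : AEMeasurable (fun p : ℝ × ℝ => ENNReal.ofReal (F p.1 p.2)) (rectMeasure R a)) :
    ∫⁻ z in Ioo (-a) a, ∫⁻ r in Ioo 0 R, ENNReal.ofReal (F r z)
      = ∫⁻ p, ENNReal.ofReal (F p.1 p.2) ∂rectMeasure R a :=
  (lintegral_prod_symm _ hF).symm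

theorem lintegral_Ioo_Ioo_eq_ofReal_integral
    (hF : Integrable (fun p : ℝ × ℝ => F p.1 p.2) (rectMeasure R a))
    (h0 : ∀ r ∈ Ioo 0 R, ∀ z ∈ Ioo (-a) a, 0 ≤ F r z) :
    ∫⁻ z in Ioo (-a) a, ∫⁻ r in Ioo 0 R, ENNReal.ofReal (F r z)
      = ENNReal.ofReal (∫ p, F p.1 p.2 ∂rectMeasure R a) := by
  rw [lintegral_Ioo_Ioo_eq_lintegral_rectMeasure hF.aemeasurable.ennreal_ofReal,
    ofReal_integral_eq_lintegral_ofReal hF (ae_rectMeasure_nonneg h0)]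

/-- When `F` is not integrable the right-hand side is `⊤`, so only the integrable case needs
a real inequality. -/
theorem ofReal_le_lintegral_Ioo_Ioo {x : ℝ} (hF : Measurable fun p : ℝ × ℝ => F p.1 p.2)
    (h0 : ∀ r ∈ Ioo 0 R, ∀ z ∈ Ioo (-a) a, 0 ≤ F r z)
    (hx : Integrable (fun p : ℝ × ℝ => F p.1 p.2) (rectMeasure R a) →
      x ≤ ∫ p, F p.1 p.2 ∂rectMeasure R a) :
    ENNReal.ofReal x ≤ ∫⁻ z in Ioo (-a) a, ∫⁻ r in Ioo 0 R, ENNReal.ofReal (F r z) := by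
  by_cases hi : Integrable (fun p : ℝ × ℝ => F p.1 p.2) (rectMeasure R a)
  · rw [lintegral_Ioo_Ioo_eq_ofReal_integral hi h0]
    exact ENNReal.ofReal_le_ofReal (hx hi)
  · have htop := mt (lintegral_ofReal_ne_top_iff_integrable hF.aestronglyMeasurable
      (ae_rectMeasure_nonneg h0)).1 hi
    rw [lintegral_Ioo_Ioo_eq_lintegral_rectMeasure hF.ennreal_ofReal.aemeasurable,
      not_ne_iff.1 htop]
    exact le_top

end Rectangle

section IntegrationByParts

variable {R a : ℝ}

theorem integral_rectMeasure_eq_zero_of_z_slices {F : ℝ × ℝ → ℝ} (ha : 0 ≤ a)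
    (hF : Integrable F (rectMeasure R a)) (h : ∀ r ∈ Ioo 0 R, ∫ z in (-a)..a, F (r, z) = 0) :
    ∫ p, F p ∂rectMeasure R a = 0 := by
  rw [rectMeasure, integral_prod F hF]
  refine (setIntegral_congr_fun measurableSet_Ioo fun r hr => ?_).trans (integral_zero _ _)
  rw [← integral_Ioc_eq_integral_Ioo, ← intervalIntegral.integral_of_le (by linarith)]
  exact h r hr

theorem integral_rectMeasure_eq_zero_of_r_slices {F : ℝ × ℝ → ℝ} (hR : 0 ≤ R)
    (hF : Integrable F (rectMeasure R a)) (h : ∀ z ∈ Ioo (-a) a, ∫ r in 0..R, F (r, z) = 0) :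
    ∫ p, F p ∂rectMeasure R a = 0 := by
  rw [rectMeasure, integral_prod_symm F hF]
  refine (setIntegral_congr_fun measurableSet_Ioo fun z hz => ?_).trans (integral_zero _ _)
  rw [← integral_Ioc_eq_integral_Ioo, ← intervalIntegral.integral_of_le hR]
  exact h z hz

variable {f g : ℝ → ℝ → ℝ}

theorem integral_mul_pdz_mul_eq_neg (ha : 0 ≤ a) (hf : ContDiff ℝ 1 (uncurry f))
    (hg : ContDiff ℝ 1 (uncurry g)) (k : ℝ → ℝ)
    (hfa : ∀ r ∈ Ioo 0 R, f r a = 0 ∧ f r (-a) = 0)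
    (h₁ : Integrable (fun p : ℝ × ℝ => f p.1 p.2 * pdz g p.1 p.2 * k p.1) (rectMeasure R a))
    (h₂ : Integrable (fun p : ℝ × ℝ => pdz f p.1 p.2 * g p.1 p.2 * k p.1) (rectMeasure R a)) :
    ∫ p, f p.1 p.2 * pdz g p.1 p.2 * k p.1 ∂rectMeasure R a
      = -∫ p, pdz f p.1 p.2 * g p.1 p.2 * k p.1 ∂rectMeasure R a := by
  rw [eq_neg_iff_add_eq_zero, ← integral_add h₁ h₂]
  refine integral_rectMeasure_eq_zero_of_z_slices (F := fun p =>
    f p.1 p.2 * pdz g p.1 p.2 * k p.1 + pdz f p.1 p.2 * g p.1 p.2 * k p.1) ha (h₁.add h₂)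
    fun r hr => ?_
  have hcont : Continuous fun z => pdz f r z * g r z + f r z * pdz g r z :=
    (((continuous_pdz hf).uncurry_left r).mul
      (hg.continuous.uncurry_left r)).add
      ((hf.continuous.uncurry_left r).mul
        ((continuous_pdz hg).uncurry_left r))
  have hslice : ∫ z in (-a)..a, (pdz f r z * g r z + f r z * pdz g r z) = 0 := by
    rw [intervalIntegral.integral_eq_sub_of_hasDerivAt
      (fun z _ => (hasDerivAt_pdz hf r z).mul (hasDerivAt_pdz hg r z))
      (hcont.intervalIntegrable _ _)]
    simp [(hfa r hr).1, (hfa r hr).2]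
  calc ∫ z in (-a)..a, (f r z * pdz g r z * k r + pdz f r z * g r z * k r)
      = (∫ z in (-a)..a, (pdz f r z * g r z + f r z * pdz g r z)) * k r := by
        rw [← intervalIntegral.integral_mul_const]
        congr 1 with z
        ring
    _ = 0 := by rw [hslice, zero_mul]

/-- The weight `r` kills the boundary term on the axis. -/
theorem integral_pdr_mul_mul_id_eq (hR : 0 ≤ R) (hf : ContDiff ℝ 1 (uncurry f))
    (hg : ContDiff ℝ 1 (uncurry g)) (hgR : ∀ z ∈ Ioo (-a) a, g R z = 0) :
    ∫ p, pdr f p.1 p.2 * g p.1 p.2 * p.1 ∂rectMeasure R a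
      = -∫ p, f p.1 p.2 * pdr g p.1 p.2 * p.1 ∂rectMeasure R a
        - ∫ p, f p.1 p.2 * g p.1 p.2 ∂rectMeasure R a := by
  have cf := hf.continuous
  have cg := hg.continuous
  have cfr := continuous_pdr hf
  have cgr := continuous_pdr hg
  have h₁ : Integrable (fun p : ℝ × ℝ => pdr f p.1 p.2 * g p.1 p.2 * p.1) (rectMeasure R a) :=
    ((cfr.mul cg).mul continuous_fst).integrable_rectMeasure
  have h₂ : Integrable (fun p : ℝ × ℝ => f p.1 p.2 * pdr g p.1 p.2 * p.1) (rectMeasure R a) :=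
    ((cf.mul cgr).mul continuous_fst).integrable_rectMeasure
  have h₃ : Integrable (fun p : ℝ × ℝ => f p.1 p.2 * g p.1 p.2) (rectMeasure R a) :=
    (cf.mul cg).integrable_rectMeasure
  have hsum : ∫ p, (pdr f p.1 p.2 * g p.1 p.2 * p.1 + f p.1 p.2 * pdr g p.1 p.2 * p.1
      + f p.1 p.2 * g p.1 p.2) ∂rectMeasure R a = 0 := by
    refine integral_rectMeasure_eq_zero_of_r_slices (F := fun p => pdr f p.1 p.2 * g p.1 p.2 * p.1
      + f p.1 p.2 * pdr g p.1 p.2 * p.1 + f p.1 p.2 * g p.1 p.2) hR ((h₁.add h₂).add h₃)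
      fun z hz => ?_
    have hderiv : ∀ r ∈ uIcc 0 R, HasDerivAt (fun s => f s z * g s z * s)
        (pdr f r z * g r z * r + f r z * pdr g r z * r + f r z * g r z) r := fun r _ =>
      (((hasDerivAt_pdr hf r z).mul (hasDerivAt_pdr hg r z)).mul (hasDerivAt_id' r)).congr_deriv
        (by simp only [Pi.mul_apply]; ring)
    have hcont : Continuous fun r =>
        pdr f r z * g r z * r + f r z * pdr g r z * r + f r z * g r z :=
      (((cfr.uncurry_right z).mul (cg.uncurry_right z)).mul continuous_id).add
        (((cf.uncurry_right z).mul (cgr.uncurry_right z)).mul continuous_id) |>.add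
        ((cf.uncurry_right z).mul (cg.uncurry_right z))
    rw [intervalIntegral.integral_eq_sub_of_hasDerivAt hderiv (hcont.intervalIntegrable _ _),
      hgR z hz]
    simp
  rw [integral_add ?_ h₃, integral_add h₁ h₂] at hsum
  · linarith
  · exact h₁.add h₂

end IntegrationByParts

noncomputable def streamOp (ψ : ℝ → ℝ → ℝ) (r z : ℝ) : ℝ :=
  -(pdr (pdr ψ) r z) - 1 / r * pdr ψ r z - pdz (pdz ψ) r z + ψ r z / r ^ 2

section StreamFunction

variable {R a : ℝ} {ψ : ℝ → ℝ → ℝ}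

theorem pdr_eq_zero_of_z_boundary
    (hψa : ∀ r ∈ Ioo 0 R, ψ r a = 0 ∧ ψ r (-a) = 0) :
    ∀ r ∈ Ioo 0 R, pdr ψ r a = 0 ∧ pdr ψ r (-a) = 0 := fun _ hr =>
  ⟨pdr_eq_zero_of_eqOn isOpen_Ioo (fun s hs => (hψa s hs).1) hr,
    pdr_eq_zero_of_eqOn isOpen_Ioo (fun s hs => (hψa s hs).2) hr⟩

theorem integral_pdr_pdr_mul_pdz_pdz (ha : 0 ≤ a) (hR : 0 ≤ R) (hψ : ContDiff ℝ 3 (uncurry ψ))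
    (hψR : ∀ z ∈ Ioo (-a) a, ψ R z = 0) (hψa : ∀ r ∈ Ioo 0 R, ψ r a = 0 ∧ ψ r (-a) = 0) :
    ∫ p, pdr (pdr ψ) p.1 p.2 * pdz (pdz ψ) p.1 p.2 * p.1 ∂rectMeasure R a
      = ∫ p, pdr (pdz ψ) p.1 p.2 * pdr (pdz ψ) p.1 p.2 * p.1 ∂rectMeasure R a
        + ∫ p, pdr (pdz ψ) p.1 p.2 * pdz ψ p.1 p.2 ∂rectMeasure R a := by
  have hr : ContDiff ℝ 2 (uncurry (pdr ψ)) := contDiff_pdr hψ (by norm_num)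
  have hz : ContDiff ℝ 2 (uncurry (pdz ψ)) := contDiff_pdz hψ (by norm_num)
  have hrr : ContDiff ℝ 1 (uncurry (pdr (pdr ψ))) := contDiff_pdr hr (by norm_num)
  have hrz : ContDiff ℝ 1 (uncurry (pdr (pdz ψ))) := contDiff_pdr hz (by norm_num)
  have hrrz := continuous_pdr hrz
  have hzz := continuous_pdz (hz.of_le one_le_two)
  have hrr' := hrr.continuous
  have hz' := hz.continuous
  have hzrr : pdz (pdr (pdr ψ)) = pdr (pdr (pdz ψ)) := by
    rw [pdz_pdr_comm hr, pdz_pdr_comm (hψ.of_le (by norm_num))]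
  have hψz_R : ∀ z ∈ Ioo (-a) a, pdz ψ R z = 0 := fun z hz => pdz_eq_zero_of_eqOn isOpen_Ioo hψR hz
  have hz_ibp := integral_mul_pdz_mul_eq_neg ha hrr (hz.of_le one_le_two) (fun r => r)
    (pdr_eq_zero_of_z_boundary (pdr_eq_zero_of_z_boundary hψa))
    (Continuous.integrable_rectMeasure (by fun_prop))
    (Continuous.integrable_rectMeasure (by rw [hzrr]; fun_prop))
  have hr_ibp := integral_pdr_mul_mul_id_eq hR hrz (hz.of_le one_le_two) hψz_R
  rw [hz_ibp, hzrr, hr_ibp]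
  ring

theorem integral_pdr_mul_pdz_pdz (ha : 0 ≤ a) (hψ : ContDiff ℝ 2 (uncurry ψ))
    (hψa : ∀ r ∈ Ioo 0 R, ψ r a = 0 ∧ ψ r (-a) = 0) :
    ∫ p, pdr ψ p.1 p.2 * pdz (pdz ψ) p.1 p.2 ∂rectMeasure R a
      = -∫ p, pdr (pdz ψ) p.1 p.2 * pdz ψ p.1 p.2 ∂rectMeasure R a := by
  have hr : ContDiff ℝ 1 (uncurry (pdr ψ)) := contDiff_pdr hψ (by norm_num)
  have hz : ContDiff ℝ 1 (uncurry (pdz ψ)) := contDiff_pdz hψ (by norm_num)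
  have hrz : Continuous (uncurry (pdr (pdz ψ))) := continuous_pdr hz
  have hzz : Continuous (uncurry (pdz (pdz ψ))) := continuous_pdz hz
  have hr' := hr.continuous
  have hz' := hz.continuous
  have := integral_mul_pdz_mul_eq_neg ha hr hz (fun _ => 1) (pdr_eq_zero_of_z_boundary hψa)
    (Continuous.integrable_rectMeasure (by fun_prop))
    (Continuous.integrable_rectMeasure (by rw [pdz_pdr_comm hψ]; fun_prop))
  simpa only [mul_one, pdz_pdr_comm hψ] using this

theorem integral_mul_pdz_pdz_mul_inv (ha : 0 ≤ a) (hψ : ContDiff ℝ 2 (uncurry ψ))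
    (hψa : ∀ r ∈ Ioo 0 R, ψ r a = 0 ∧ ψ r (-a) = 0) (hψ0 : ∀ z ∈ Ioo (-a) a, ψ 0 z = 0) :
    ∫ p, ψ p.1 p.2 * pdz (pdz ψ) p.1 p.2 * p.1⁻¹ ∂rectMeasure R a
      = -∫ p, pdz ψ p.1 p.2 * pdz ψ p.1 p.2 * p.1⁻¹ ∂rectMeasure R a := by
  have hz : ContDiff ℝ 1 (uncurry (pdz ψ)) := contDiff_pdz hψ (by norm_num)
  have hzz : Continuous (uncurry (pdz (pdz ψ))) := continuous_pdz hz
  have hψz0 : ∀ z ∈ Ioo (-a) a, pdz ψ 0 z = 0 := fun z hz => pdz_eq_zero_of_eqOn isOpen_Ioo hψ0 hz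
  exact integral_mul_pdz_mul_eq_neg ha (hψ.of_le one_le_two) hz (fun r => r⁻¹) hψa
    (integrable_mul_mul_inv_of_eq_zero_on_axis (hψ.of_le one_le_two) hzz hψ0)
    (integrable_mul_mul_inv_of_eq_zero_on_axis hz hz.continuous hψz0)

theorem measurable_streamOp (hψ : ContDiff ℝ 2 (uncurry ψ)) :
    Measurable (uncurry (streamOp ψ)) := by
  have hr : ContDiff ℝ 1 (uncurry (pdr ψ)) := contDiff_pdr hψ (by norm_num)
  have hz : ContDiff ℝ 1 (uncurry (pdz ψ)) := contDiff_pdz hψ (by norm_num)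
  have hrr := (continuous_pdr hr).measurable
  have hzz := (continuous_pdz hz).measurable
  exact ((hrr.neg.sub ((measurable_const.div measurable_fst).mul hr.continuous.measurable)).sub
    hzz).add (hψ.continuous.measurable.div (measurable_fst.pow_const 2))

theorem neg_streamOp_mul_pdz_pdz_mul {r : ℝ} (hr : r ≠ 0) (z : ℝ) :
    -streamOp ψ r z * pdz (pdz ψ) r z * r
      = pdr (pdr ψ) r z * pdz (pdz ψ) r z * r + pdr ψ r z * pdz (pdz ψ) r z
        + pdz (pdz ψ) r z * pdz (pdz ψ) r z * r - ψ r z * pdz (pdz ψ) r z * r⁻¹ := by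
  rw [streamOp]
  field_simp
  ring

theorem integral_neg_streamOp_mul_pdz_pdz (ha : 0 ≤ a) (hR : 0 ≤ R)
    (hψ : ContDiff ℝ 3 (uncurry ψ)) (hψR : ∀ z ∈ Ioo (-a) a, ψ R z = 0)
    (hψa : ∀ r ∈ Ioo 0 R, ψ r a = 0 ∧ ψ r (-a) = 0) (hψ0 : ∀ z ∈ Ioo (-a) a, ψ 0 z = 0) :
    ∫ p, -streamOp ψ p.1 p.2 * pdz (pdz ψ) p.1 p.2 * p.1 ∂rectMeasure R a
      = ∫ p, (pdr (pdz ψ) p.1 p.2 ^ 2 + pdz (pdz ψ) p.1 p.2 ^ 2) * p.1 ∂rectMeasure R a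
        + ∫ p, pdz ψ p.1 p.2 ^ 2 / p.1 ^ 2 * p.1 ∂rectMeasure R a := by
  have hψ2 : ContDiff ℝ 2 (uncurry ψ) := hψ.of_le (by norm_num)
  have hr := continuous_pdr (hψ2.of_le one_le_two)
  have hrr := continuous_pdr (contDiff_pdr hψ (by norm_num))
  have hrz := continuous_pdr (contDiff_pdz hψ (by norm_num))
  have hzz := continuous_pdz (contDiff_pdz hψ (by norm_num))
  have h₁ : Integrable (fun p : ℝ × ℝ => pdr (pdr ψ) p.1 p.2 * pdz (pdz ψ) p.1 p.2 * p.1)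
      (rectMeasure R a) := Continuous.integrable_rectMeasure (by fun_prop)
  have h₂ : Integrable (fun p : ℝ × ℝ => pdr ψ p.1 p.2 * pdz (pdz ψ) p.1 p.2)
      (rectMeasure R a) := Continuous.integrable_rectMeasure (by fun_prop)
  have h₃ : Integrable (fun p : ℝ × ℝ => pdz (pdz ψ) p.1 p.2 * pdz (pdz ψ) p.1 p.2 * p.1)
      (rectMeasure R a) := Continuous.integrable_rectMeasure (by fun_prop)
  have h₄ := integrable_mul_mul_inv_of_eq_zero_on_axis (R := R) (hψ2.of_le one_le_two) hzz hψ0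
  have hrz₂ : Integrable (fun p : ℝ × ℝ => pdr (pdz ψ) p.1 p.2 * pdr (pdz ψ) p.1 p.2 * p.1)
      (rectMeasure R a) := Continuous.integrable_rectMeasure (by fun_prop)
  have hexpand : (fun p : ℝ × ℝ => -streamOp ψ p.1 p.2 * pdz (pdz ψ) p.1 p.2 * p.1)
      =ᵐ[rectMeasure R a] fun p => pdr (pdr ψ) p.1 p.2 * pdz (pdz ψ) p.1 p.2 * p.1
        + pdr ψ p.1 p.2 * pdz (pdz ψ) p.1 p.2 + pdz (pdz ψ) p.1 p.2 * pdz (pdz ψ) p.1 p.2 * p.1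
        - ψ p.1 p.2 * pdz (pdz ψ) p.1 p.2 * p.1⁻¹ := by
    filter_upwards [ae_rectMeasure_pos] with p hp using neg_streamOp_mul_pdz_pdz_mul hp.ne' p.2
  have hsplit : ∫ p, (pdr (pdz ψ) p.1 p.2 ^ 2 + pdz (pdz ψ) p.1 p.2 ^ 2) * p.1 ∂rectMeasure R a
      = ∫ p, pdr (pdz ψ) p.1 p.2 * pdr (pdz ψ) p.1 p.2 * p.1 ∂rectMeasure R a
        + ∫ p, pdz (pdz ψ) p.1 p.2 * pdz (pdz ψ) p.1 p.2 * p.1 ∂rectMeasure R a := by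
    rw [← integral_add hrz₂ h₃]
    congr 1 with p
    ring
  have hinv : ∫ p, pdz ψ p.1 p.2 ^ 2 / p.1 ^ 2 * p.1 ∂rectMeasure R a
      = ∫ p, pdz ψ p.1 p.2 * pdz ψ p.1 p.2 * p.1⁻¹ ∂rectMeasure R a := by
    refine integral_congr_ae ?_
    filter_upwards [ae_rectMeasure_pos] with p hp
    field_simp
  rw [integral_congr_ae hexpand, integral_sub ?_ h₄, integral_add ?_ h₃, integral_add h₁ h₂,
    integral_pdr_pdr_mul_pdz_pdz ha hR hψ hψR hψa, integral_pdr_mul_pdz_pdz ha hψ2 hψa,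
    integral_mul_pdz_pdz_mul_inv ha hψ2 hψa hψ0, hsplit, hinv]
  · ring
  · exact h₁.add h₂
  · exact (h₁.add h₂).add h₃

theorem integrable_neg_streamOp_mul_pdz_pdz (hψ : ContDiff ℝ 2 (uncurry ψ))
    (hL : Integrable (fun p : ℝ × ℝ => streamOp ψ p.1 p.2 ^ 2 * p.1) (rectMeasure R a)) :
    Integrable (fun p : ℝ × ℝ => -streamOp ψ p.1 p.2 * pdz (pdz ψ) p.1 p.2 * p.1)
      (rectMeasure R a) := by
  have hzz := continuous_pdz (contDiff_pdz hψ (by norm_num))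
  have hZ : Integrable (fun p : ℝ × ℝ => pdz (pdz ψ) p.1 p.2 ^ 2 * p.1) (rectMeasure R a) :=
    Continuous.integrable_rectMeasure (by fun_prop)
  refine Integrable.mono' ((hL.add hZ).div_const 2) ?_ ?_
  · exact (((measurable_streamOp hψ).neg.mul hzz.measurable).mul
      measurable_fst).aestronglyMeasurable
  · filter_upwards [ae_rectMeasure_pos] with p hp
    rw [Real.norm_eq_abs, abs_mul, abs_mul, abs_neg, abs_of_pos hp]
    have := mul_le_mul_of_nonneg_right
      (two_mul_le_add_sq |streamOp ψ p.1 p.2| |pdz (pdz ψ) p.1 p.2|) hp.le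
    simp only [sq_abs] at this
    simp only [Pi.add_apply]
    linarith

/-- Young's inequality `-L ψ,zz ≤ (L² + ψ,zz²) / 2` for `L = streamOp ψ`; the `ψ,zz²` term is
absorbed by the left-hand side. -/
theorem integral_pdz_sq_add_le_integral_streamOp_sq (ha : 0 ≤ a) (hR : 0 ≤ R)
    (hψ : ContDiff ℝ 3 (uncurry ψ)) (hψR : ∀ z ∈ Ioo (-a) a, ψ R z = 0)
    (hψa : ∀ r ∈ Ioo 0 R, ψ r a = 0 ∧ ψ r (-a) = 0) (hψ0 : ∀ z ∈ Ioo (-a) a, ψ 0 z = 0)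
    (hL : Integrable (fun p : ℝ × ℝ => streamOp ψ p.1 p.2 ^ 2 * p.1) (rectMeasure R a)) :
    ∫ p, (pdr (pdz ψ) p.1 p.2 ^ 2 + pdz (pdz ψ) p.1 p.2 ^ 2) * p.1 ∂rectMeasure R a
        + ∫ p, pdz ψ p.1 p.2 ^ 2 / p.1 ^ 2 * p.1 ∂rectMeasure R a
      ≤ ∫ p, streamOp ψ p.1 p.2 ^ 2 * p.1 ∂rectMeasure R a := by
  have hψ2 : ContDiff ℝ 2 (uncurry ψ) := hψ.of_le (by norm_num)
  have hrz := continuous_pdr (contDiff_pdz hψ (by norm_num))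
  have hzz := continuous_pdz (contDiff_pdz hψ (by norm_num))
  have hZ : Integrable (fun p : ℝ × ℝ => pdz (pdz ψ) p.1 p.2 ^ 2 * p.1) (rectMeasure R a) :=
    Continuous.integrable_rectMeasure (by fun_prop)
  have hyoung : ∫ p, -streamOp ψ p.1 p.2 * pdz (pdz ψ) p.1 p.2 * p.1 ∂rectMeasure R a
      ≤ ∫ p, (streamOp ψ p.1 p.2 ^ 2 * p.1 + pdz (pdz ψ) p.1 p.2 ^ 2 * p.1) / 2
          ∂rectMeasure R a := by
    refine integral_mono_ae (integrable_neg_streamOp_mul_pdz_pdz hψ2 hL)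
      ((hL.add hZ).div_const 2) ?_
    filter_upwards [ae_rectMeasure_pos] with p hp
    nlinarith [mul_nonneg (sq_nonneg (streamOp ψ p.1 p.2 + pdz (pdz ψ) p.1 p.2)) hp.le]
  have hZle : ∫ p, pdz (pdz ψ) p.1 p.2 ^ 2 * p.1 ∂rectMeasure R a
      ≤ ∫ p, (pdr (pdz ψ) p.1 p.2 ^ 2 + pdz (pdz ψ) p.1 p.2 ^ 2) * p.1 ∂rectMeasure R a := by
    refine integral_mono_ae hZ (Continuous.integrable_rectMeasure (by fun_prop)) ?_
    filter_upwards [ae_rectMeasure_pos] with p hp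
    nlinarith [mul_nonneg (sq_nonneg (pdr (pdz ψ) p.1 p.2)) hp.le]
  have hnonneg : 0 ≤ ∫ p, pdz ψ p.1 p.2 ^ 2 / p.1 ^ 2 * p.1 ∂rectMeasure R a := by
    refine integral_nonneg_of_ae ?_
    filter_upwards [ae_rectMeasure_pos] with p hp
    positivity
  rw [integral_neg_streamOp_mul_pdz_pdz ha hR hψ hψR hψa hψ0, integral_div,
    integral_add hL hZ] at hyoung
  linarith

theorem lintegral_pdz_sq_add_eq_ofReal (hψ : ContDiff ℝ 2 (uncurry ψ))
    (hψ0 : ∀ z ∈ Ioo (-a) a, ψ 0 z = 0) :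
    (∫⁻ z in Ioo (-a) a, ∫⁻ r in Ioo 0 R,
        ENNReal.ofReal ((pdr (pdz ψ) r z ^ 2 + pdz (pdz ψ) r z ^ 2) * r))
      + ∫⁻ z in Ioo (-a) a, ∫⁻ r in Ioo 0 R, ENNReal.ofReal (pdz ψ r z ^ 2 / r ^ 2 * r)
      = ENNReal.ofReal
          (∫ p, (pdr (pdz ψ) p.1 p.2 ^ 2 + pdz (pdz ψ) p.1 p.2 ^ 2) * p.1 ∂rectMeasure R a
            + ∫ p, pdz ψ p.1 p.2 ^ 2 / p.1 ^ 2 * p.1 ∂rectMeasure R a) := by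
  have hz : ContDiff ℝ 1 (uncurry (pdz ψ)) := contDiff_pdz hψ (by norm_num)
  have hrz := continuous_pdr hz
  have hzz := continuous_pdz hz
  have hinv : Integrable (fun p : ℝ × ℝ => pdz ψ p.1 p.2 ^ 2 / p.1 ^ 2 * p.1)
      (rectMeasure R a) := by
    refine (integrable_mul_mul_inv_of_eq_zero_on_axis hz hz.continuous
      fun z hz => pdz_eq_zero_of_eqOn isOpen_Ioo hψ0 hz).congr ?_
    filter_upwards [ae_rectMeasure_pos] with p hp
    field_simp
  rw [lintegral_Ioo_Ioo_eq_ofReal_integral (Continuous.integrable_rectMeasure (by fun_prop))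
      fun r hr z _ => mul_nonneg (by positivity) hr.1.le,
    lintegral_Ioo_Ioo_eq_ofReal_integral hinv fun r hr z _ => mul_nonneg (by positivity) hr.1.le,
    ← ENNReal.ofReal_add (integral_nonneg_of_ae ?_) (integral_nonneg_of_ae ?_)]
  all_goals filter_upwards [ae_rectMeasure_pos] with p hp; positivity

end StreamFunction

/-- Estimate (2.12) of Lemma 2.5: second-order estimate in `z` for the axially symmetric
stream function satisfying `-ψ,rr - (1/r)ψ,r - ψ,zz + ψ/r² = ω` in `(0,R) × (-a,a)`. -/
theorem second_order_z_estimate (R a : ℝ) (hR : 0 < R) (ha : 0 < a) :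
    ∃ c > (0:ℝ), ∀ ψ ω : ℝ → ℝ → ℝ,
      ContDiff ℝ (⊤ : ℕ∞) (Function.uncurry ψ) →
      (∀ r ∈ Ioo 0 R, ∀ z ∈ Ioo (-a) a,
        -(pdr (pdr ψ) r z) - 1 / r * pdr ψ r z - pdz (pdz ψ) r z + ψ r z / r ^ 2 = ω r z) →
      (∀ z ∈ Icc (-a) a, ψ R z = 0) →
      (∀ r ∈ Icc 0 R, ψ r a = 0 ∧ ψ r (-a) = 0) →
      (∃ C : ℝ, ∀ r ∈ Ioo 0 R, ∀ z ∈ Ioo (-a) a, |ψ r z| ≤ C * r) →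
      (∫⁻ z in Ioo (-a) a, ∫⁻ r in Ioo (0:ℝ) R,
          ENNReal.ofReal (((pdr (pdz ψ) r z) ^ 2 + (pdz (pdz ψ) r z) ^ 2) * r))
        + (∫⁻ z in Ioo (-a) a, ∫⁻ r in Ioo (0:ℝ) R,
            ENNReal.ofReal ((pdz ψ r z) ^ 2 / r ^ 2 * r))
        ≤ ENNReal.ofReal c * ∫⁻ z in Ioo (-a) a, ∫⁻ r in Ioo (0:ℝ) R,
            ENNReal.ofReal ((ω r z) ^ 2 * r) := by
  refine ⟨1, one_pos, fun ψ ω hψ hω hψR hψa ⟨C, hC⟩ => ?_⟩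
  have hψ3 : ContDiff ℝ 3 (uncurry ψ) := hψ.of_le (WithTop.coe_le_coe.mpr le_top)
  have hψ2 : ContDiff ℝ 2 (uncurry ψ) := hψ3.of_le (by norm_num)
  have hψ0 : ∀ z ∈ Ioo (-a) a, ψ 0 z = 0 := fun z hz =>
    eq_zero_of_abs_le_mul hR (hψ3.continuous.uncurry_right z).continuousWithinAt
      fun r hr => hC r hr z hz
  have hωψ : ∫⁻ z in Ioo (-a) a, ∫⁻ r in Ioo 0 R, ENNReal.ofReal (ω r z ^ 2 * r)
      = ∫⁻ z in Ioo (-a) a, ∫⁻ r in Ioo 0 R, ENNReal.ofReal (streamOp ψ r z ^ 2 * r) :=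
    setLIntegral_congr_fun measurableSet_Ioo fun z hz =>
      setLIntegral_congr_fun measurableSet_Ioo fun r hr => by rw [← hω r hr z hz, streamOp]
  rw [lintegral_pdz_sq_add_eq_ofReal hψ2 hψ0, ENNReal.ofReal_one, one_mul, hωψ]
  exact ofReal_le_lintegral_Ioo_Ioo (((measurable_streamOp hψ2).pow_const 2).mul measurable_fst)
    (fun r hr z _ => mul_nonneg (sq_nonneg _) hr.1.le)
    (integral_pdz_sq_add_le_integral_streamOp_sq ha.le hR.le hψ3
      (fun z hz => hψR z (Ioo_subset_Icc_self hz)) (fun r hr => hψa r (Ioo_subset_Icc_self hr)) hψ0)
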